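/- The least-squares minimization problem: find σ ∈ H_{g,-}(div;Ω) minimizing J₂(τ;f,g) = ‖γτ + β(∇·τ - f)‖₀² has a unique solution with minimum value zero, given by σ = βu where u solves the transport equation. -/

import Mathlib

/-!
Proof idea: the residual `γτ + β(∇·τ - f)` vanishes identically at `σ = βu`, so `J₂(σ) = 0` is the
minimum. Since the residual is affine in `(τ, ∇·τ)`, any other minimizer `p` satisfies
`γ(p - σ) + (∇·(p - σ))β = 0` a.e.; as `γ ≠ 0` a.e. this says `p - σ = vβ` with
`∇·(p - σ) + γv = 0`, i.e. `v` solves the homogeneous transport problem, hence `v = 0`.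
-/

open MeasureTheory Real RealInnerProductSpace ENNReal

/-- The second least-squares functional `J₂(τ; f, g) = ‖γτ + β(∇·τ - f)‖₀²`,
acting on pairs `p = (τ, ∇·τ)`. -/
noncomputable def lsJ2 {α : Type*} [MeasurableSpace α] {d : ℕ}
    (μ : Measure α) (β : α → EuclideanSpace ℝ (Fin d)) (γ : α → ℝ) (f : α → ℝ)
    (p : (α → EuclideanSpace ℝ (Fin d)) × (α → ℝ)) : ℝ≥0∞ :=
  eLpNorm (fun x => γ x • p.1 x + (p.2 x - f x) • β x) 2 μ ^ 2

theorem eq_div_smul_of_smul_add_smul_eq_zero {𝕜 E : Type*} [Field 𝕜] [AddCommGroup E]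
    [Module 𝕜 E] {c s : 𝕜} {τ b : E} (hc : c ≠ 0) (h : c • τ + s • b = 0) :
    τ = (-s / c) • b := by
  rw [div_eq_inv_mul, mul_smul, neg_smul, ← eq_neg_of_add_eq_zero_left h, inv_smul_smul₀ hc]

namespace LeastSquares

variable {α : Type*} {d : ℕ} (β : α → EuclideanSpace ℝ (Fin d)) (γ : α → ℝ)

def residual (f : α → ℝ) (p : (α → EuclideanSpace ℝ (Fin d)) × (α → ℝ)) :
    α → EuclideanSpace ℝ (Fin d) :=
  fun x => γ x • p.1 x + (p.2 x - f x) • β x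

/-- The pair `(βu, f - γu)`: the flux `σ = βu` together with its divergence when `u` solves
`∇·(βu) + γu = f`. -/
def transportPair (f u : α → ℝ) : (α → EuclideanSpace ℝ (Fin d)) × (α → ℝ) :=
  (fun x => u x • β x, fun x => f x - γ x * u x)

theorem residual_transportPair (f u : α → ℝ) : residual β γ f (transportPair β γ f u) = 0 := by
  funext x
  simp only [residual, transportPair, smul_smul, ← add_smul, Pi.zero_apply]
  rw [show γ x * u x + (f x - γ x * u x - f x) = 0 by ring, zero_smul]

theorem residual_sub_residual (f : α → ℝ) (p q : (α → EuclideanSpace ℝ (Fin d)) × (α → ℝ)) :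
    residual β γ f p - residual β γ f q = residual β γ 0 (p - q) := by
  funext x
  simp only [residual, Pi.sub_apply, Prod.fst_sub, Prod.snd_sub, Pi.zero_apply, sub_zero,
    smul_sub, sub_smul]
  abel

theorem aestronglyMeasurable_residual [MeasurableSpace α] {μ : Measure α} (hβ : Measurable β)
    (hγ : Measurable γ) {f : α → ℝ} (hf : AEStronglyMeasurable f μ)
    {p : (α → EuclideanSpace ℝ (Fin d)) × (α → ℝ)} (h₁ : AEStronglyMeasurable p.1 μ)
    (h₂ : AEStronglyMeasurable p.2 μ) : AEStronglyMeasurable (residual β γ f p) μ :=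
  (hγ.aestronglyMeasurable.smul h₁).add ((h₂.sub hf).smul hβ.aestronglyMeasurable)

theorem lsJ2_eq_zero_iff [MeasurableSpace α] {μ : Measure α} {f : α → ℝ}
    {p : (α → EuclideanSpace ℝ (Fin d)) × (α → ℝ)}
    (hp : AEStronglyMeasurable (residual β γ f p) μ) :
    lsJ2 μ β γ f p = 0 ↔ residual β γ f p =ᵐ[μ] 0 := by
  rw [lsJ2, pow_eq_zero_iff two_ne_zero]
  exact eLpNorm_eq_zero_iff hp two_ne_zero

/-- A pair with vanishing homogeneous residual is `(vβ, -γv)` for `v = -∇·τ/γ`, a solution of the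
homogeneous transport problem. -/
theorem ae_eq_zero_of_residual_ae_eq_zero [MeasurableSpace α] {μ : Measure α}
    (hγ : ∀ᵐ x ∂μ, γ x ≠ 0) {V0 : Set ((α → EuclideanSpace ℝ (Fin d)) × (α → ℝ))}
    (huniq : ∀ v : α → ℝ, ∀ p ∈ V0, (p.1 =ᵐ[μ] fun x => v x • β x) →
      ((fun x => p.2 x + γ x * v x) =ᵐ[μ] 0) → v =ᵐ[μ] 0)
    {q : (α → EuclideanSpace ℝ (Fin d)) × (α → ℝ)} (hq : q ∈ V0)
    (hres : residual β γ 0 q =ᵐ[μ] 0) : q.1 =ᵐ[μ] 0 ∧ q.2 =ᵐ[μ] 0 := by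
  set v : α → ℝ := fun x => -q.2 x / γ x
  have hq₁ : q.1 =ᵐ[μ] fun x => v x • β x := by
    filter_upwards [hres, hγ] with x hx hγx
    refine eq_div_smul_of_smul_add_smul_eq_zero hγx ?_
    simpa [residual] using hx
  have hq₂ : (fun x => q.2 x + γ x * v x) =ᵐ[μ] 0 := by
    filter_upwards [hγ] with x hγx
    simp only [v, Pi.zero_apply]
    field_simp
    ring
  have hv : v =ᵐ[μ] 0 := huniq v q hq hq₁ hq₂
  constructor
  · filter_upwards [hq₁, hv] with x hx hvx
    simp_all
  · filter_upwards [hq₂, hv] with x hx hvx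
    simp_all

end LeastSquares

open LeastSquares in
theorem stmt_6_general {α : Type*} [MeasurableSpace α] {d : ℕ}
    (μ : Measure α) (β : α → EuclideanSpace ℝ (Fin d)) (γ : α → ℝ) (f : α → ℝ)
    (hmβ : Measurable β) (hmγ : Measurable γ)
    (hγ : ∀ᵐ x ∂μ, γ x ≠ 0)
    -- Vg models H_{g,-}(div;Ω), V0 models H_{0,-}(div;Ω)
    (Vg V0 : Set ((α → EuclideanSpace ℝ (Fin d)) × (α → ℝ)))
    (hVgmeas : ∀ p ∈ Vg, AEStronglyMeasurable p.1 μ ∧ AEStronglyMeasurable p.2 μ)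
    (hdiff : ∀ p ∈ Vg, ∀ q ∈ Vg, (p.1 - q.1, p.2 - q.2) ∈ V0)
    -- uniqueness for the homogeneous transport problem with zero inflow data
    (huniq : ∀ v : α → ℝ, ∀ p ∈ V0, (p.1 =ᵐ[μ] fun x => v x • β x) →
      ((fun x => p.2 x + γ x * v x) =ᵐ[μ] 0) → v =ᵐ[μ] 0)
    -- u ∈ W solves the transport equation with inflow data g
    (u : α → ℝ)
    (hsol : ((fun x => u x • β x), (fun x => f x - γ x * u x)) ∈ Vg) :
    lsJ2 μ β γ f ((fun x => u x • β x), (fun x => f x - γ x * u x)) = 0 ∧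
    (∀ p ∈ Vg,
      lsJ2 μ β γ f ((fun x => u x • β x), (fun x => f x - γ x * u x)) ≤ lsJ2 μ β γ f p) ∧
    (∀ p ∈ Vg, (∀ q ∈ Vg, lsJ2 μ β γ f p ≤ lsJ2 μ β γ f q) →
      p.1 =ᵐ[μ] (fun x => u x • β x) ∧ p.2 =ᵐ[μ] (fun x => f x - γ x * u x)) := by
  set σ := transportPair β γ f u
  have hσ : lsJ2 μ β γ f σ = 0 :=
    (lsJ2_eq_zero_iff β γ (by rw [residual_transportPair]; exact aestronglyMeasurable_const)).2
      (by rw [residual_transportPair])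
  refine ⟨hσ, fun p _ => hσ ▸ zero_le, fun p hp hmin => ?_⟩
  have hres : residual β γ f p = residual β γ 0 (p - σ) := by
    rw [← residual_sub_residual, residual_transportPair, sub_zero]
  have hmeas : AEStronglyMeasurable (residual β γ f p) μ := hres ▸
    aestronglyMeasurable_residual β γ hmβ hmγ aestronglyMeasurable_const
      ((hVgmeas p hp).1.sub (hVgmeas σ hsol).1) ((hVgmeas p hp).2.sub (hVgmeas σ hsol).2)
  have hp0 : residual β γ f p =ᵐ[μ] 0 :=
    (lsJ2_eq_zero_iff β γ hmeas).1 (le_antisymm (hσ ▸ hmin σ hsol) (zero_le))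
  obtain ⟨h₁, h₂⟩ :=
    ae_eq_zero_of_residual_ae_eq_zero β γ hγ huniq (hdiff p hp σ hsol) (hres ▸ hp0)
  exact ⟨Filter.eventuallyEq_iff_sub.2 h₁, Filter.eventuallyEq_iff_sub.2 h₂⟩

/-- the least-squares problem `min J₂(τ; f, g)` over `H_{g,-}(div;Ω)`
(modelled as a set `Vg` of pairs `(τ, ∇·τ)`) has a unique solution, the minimum value
is zero, and the minimizer is `σ = βu`, where `u` solves the transport equation
`∇·(βu) + γu = f`, `u = g` on `Γ₋` (encoded by `(βu, f - γu) ∈ Vg`); here `γ ≠ 0` a.e. -/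
theorem stmt_6 {α : Type*} [MeasurableSpace α] {d : ℕ}
    (μ : Measure α) (β : α → EuclideanSpace ℝ (Fin d)) (γ : α → ℝ) (f : α → ℝ)
    (hmβ : Measurable β) (hmγ : Measurable γ)
    (hγ : ∀ᵐ x ∂μ, γ x ≠ 0)
    -- Vg models H_{g,-}(div;Ω), V0 models H_{0,-}(div;Ω)
    (Vg V0 : Set ((α → EuclideanSpace ℝ (Fin d)) × (α → ℝ)))
    (hVgmeas : ∀ p ∈ Vg, AEStronglyMeasurable p.1 μ ∧ AEStronglyMeasurable p.2 μ)
    (hdiff : ∀ p ∈ Vg, ∀ q ∈ Vg, (p.1 - q.1, p.2 - q.2) ∈ V0)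
    -- uniqueness for the homogeneous transport problem with zero inflow data
    (huniq : ∀ v : α → ℝ, ∀ p ∈ V0, (p.1 =ᵐ[μ] fun x => v x • β x) →
      ((fun x => p.2 x + γ x * v x) =ᵐ[μ] 0) → v =ᵐ[μ] 0)
    -- u ∈ W solves the transport equation with inflow data g
    (u : α → ℝ) (hu : AEStronglyMeasurable u μ)
    (hsol : ((fun x => u x • β x), (fun x => f x - γ x * u x)) ∈ Vg) :
    lsJ2 μ β γ f ((fun x => u x • β x), (fun x => f x - γ x * u x)) = 0 ∧
    (∀ p ∈ Vg,
      lsJ2 μ β γ f ((fun x => u x • β x), (fun x => f x - γ x * u x)) ≤ lsJ2 μ β γ f p) ∧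
    (∀ p ∈ Vg, (∀ q ∈ Vg, lsJ2 μ β γ f p ≤ lsJ2 μ β γ f q) →
      p.1 =ᵐ[μ] (fun x => u x • β x) ∧ p.2 =ᵐ[μ] (fun x => f x - γ x * u x)) :=
  stmt_6_general μ β γ f hmβ hmγ hγ Vg V0 hVgmeas hdiff huniq u hsol
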